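/- arXiv:2208.13291 — 4 statements merged into one kernel-verified Lean document; each statement's English description precedes it below -/
import Mathlib

section
/- If a basis satisfies ‖x − P_Λ(x)‖ ≤ C·σ̌^Λ_m(x) for all x, all m, and all greedy sets Λ of x with |Λ| = m, then the basis is reverse conservative with constant C: for all finite sets A, B ⊂ ℕ with B < A and |A| ≤ |B|, one has ‖1_A‖ ≤ C‖1_B‖. -/
open Finset Filter

noncomputable section

variable {X : Type*} [NormedAddCommGroup X] [NormedSpace ℝ X]

/-- Projection `P_A x = ∑_{n ∈ A} e_n^*(x) e_n`. -/
def proj (f : ℕ → X →L[ℝ] ℝ) (e : ℕ → X) (A : Finset ℕ) (x : X) : X :=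
  ∑ n ∈ A, f n x • e n

/-- `Λ` is a greedy set of `x`. -/
def GreedySet (f : ℕ → X →L[ℝ] ℝ) (x : X) (Λ : Finset ℕ) : Prop :=
  ∀ n ∈ Λ, ∀ m, m ∉ Λ → |f m x| ≤ |f n x|

/-- A (biorthogonal, norm-bounded, fundamental) basis system. -/
structure BasisSystem (f : ℕ → X →L[ℝ] ℝ) (e : ℕ → X) : Prop where
  biorth : ∀ n m, f n (e m) = if n = m then (1 : ℝ) else 0
  dense : Dense (Submodule.span ℝ (Set.range e) : Set X)
  bounded : ∃ c₁ c₂ : ℝ, 0 < c₁ ∧ ∀ n, c₁ ≤ ‖e n‖ ∧ ‖e n‖ ≤ c₂ ∧ ‖f n‖ ≤ c₂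

/-- `σ̌^Λ_m(x)`: inf of `‖x - P_I x‖` over `I = ∅` or intervals `I` with
`Λ ≤ max I` and `|I| ≤ m`. -/
def checkSigma (f : ℕ → X →L[ℝ] ℝ) (e : ℕ → X) (Λ : Finset ℕ) (m : ℕ) (x : X) : ℝ :=
  sInf {r : ℝ | ∃ I : Finset ℕ,
    (I = ∅ ∨ ∃ a b : ℕ, a ≤ b ∧ I = Finset.Icc a b ∧ ∀ n ∈ Λ, n ≤ b) ∧
    I.card ≤ m ∧ r = ‖x - proj f e I x‖}

/-- `σ̂^Λ_m(x)`: inf of `‖x - P_I x‖` over `I = ∅` or intervals `I` with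
`min I ≤ Λ` and `|I| ≤ m`. -/
def hatSigma (f : ℕ → X →L[ℝ] ℝ) (e : ℕ → X) (Λ : Finset ℕ) (m : ℕ) (x : X) : ℝ :=
  sInf {r : ℝ | ∃ I : Finset ℕ,
    (I = ∅ ∨ ∃ a b : ℕ, a ≤ b ∧ I = Finset.Icc a b ∧ ∀ n ∈ Λ, a ≤ n) ∧
    I.card ≤ m ∧ r = ‖x - proj f e I x‖}

/-- `σ̃^{R,Λ}_m(x)`: inf of `‖x - P_A x‖` over `|A| ≤ m`, `A > Λ`. -/
def revSigma (f : ℕ → X →L[ℝ] ℝ) (e : ℕ → X) (Λ : Finset ℕ) (m : ℕ) (x : X) : ℝ :=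
  sInf {r : ℝ | ∃ A : Finset ℕ, A.card ≤ m ∧ (∀ n ∈ Λ, ∀ a ∈ A, n < a) ∧
    r = ‖x - proj f e A x‖}

/-- Reverse partially greedy with constant `C`. -/
def RPG (f : ℕ → X →L[ℝ] ℝ) (e : ℕ → X) (C : ℝ) : Prop :=
  ∀ (x : X) (m : ℕ) (Λ : Finset ℕ), Λ.card = m → GreedySet f x Λ →
    ‖x - proj f e Λ x‖ ≤ C * revSigma f e Λ m x

/-- `(λ, RPGII)` with constant `C`. -/
def RPGII (f : ℕ → X →L[ℝ] ℝ) (e : ℕ → X) (l C : ℝ) : Prop :=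
  ∀ (x : X) (m : ℕ) (Λ : Finset ℕ), Λ.card = ⌈l * (m : ℝ)⌉₊ → GreedySet f x Λ →
    ‖x - proj f e Λ x‖ ≤ C * checkSigma f e Λ m x

/-- Quasi-greedy with constant `C`. -/
def QG (f : ℕ → X →L[ℝ] ℝ) (e : ℕ → X) (C : ℝ) : Prop :=
  ∀ (x : X) (Λ : Finset ℕ), GreedySet f x Λ → ‖proj f e Λ x‖ ≤ C * ‖x‖

/-- Suppression quasi-greedy with constant `C`. -/
def SuppQG (f : ℕ → X →L[ℝ] ℝ) (e : ℕ → X) (C : ℝ) : Prop :=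
  ∀ (x : X) (Λ : Finset ℕ), GreedySet f x Λ → ‖x - proj f e Λ x‖ ≤ C * ‖x‖

/-- Reverse conservative with constant `C`. -/
def RevConservative (e : ℕ → X) (C : ℝ) : Prop :=
  ∀ A B : Finset ℕ, (∀ b ∈ B, ∀ a ∈ A, b < a) → A.card ≤ B.card →
    ‖∑ n ∈ A, e n‖ ≤ C * ‖∑ n ∈ B, e n‖

/-- `s(A) = max A - min A + 1` (and `s(∅) = 0`). -/
def spread (A : Finset ℕ) : ℕ :=
  if h : A.Nonempty then A.max' h - A.min' h + 1 else 0

/-- `(λ, reverse conservative of type II)` with constant `C`. -/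
def RevConsII (e : ℕ → X) (l C : ℝ) : Prop :=
  ∀ A B : Finset ℕ, (l - 1) * spread A + (A.card : ℝ) ≤ (B.card : ℝ) →
    (∀ b ∈ B, ∀ a ∈ A, b < a) → ‖∑ n ∈ A, e n‖ ≤ C * ‖∑ n ∈ B, e n‖

/-- `x` surrounds `A`: `supp x ∩ [min A, max A] = ∅` (vacuous for `A = ∅`). -/
def Surrounds (f : ℕ → X →L[ℝ] ℝ) (x : X) (A : Finset ℕ) : Prop :=
  ∀ a ∈ A, ∀ b ∈ A, ∀ n, a ≤ n → n ≤ b → f n x = 0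

/-- `(λ, RPSLC)` with constant `Δ`. -/
def RPSLC (f : ℕ → X →L[ℝ] ℝ) (e : ℕ → X) (l Δ : ℝ) : Prop :=
  ∀ x : X, (∀ n, |f n x| ≤ 1) →
    ∀ ε δ : ℕ → ℝ, (∀ n, |ε n| = 1) → (∀ n, |δ n| = 1) →
    ∀ A B : Finset ℕ, (l - 1) * spread A + (A.card : ℝ) ≤ (B.card : ℝ) →
    (∀ n ∈ B, f n x = 0) → (∀ b ∈ B, ∀ a ∈ A, b < a) → Surrounds f x A →
    ‖x + ∑ n ∈ A, ε n • e n‖ ≤ Δ * ‖x + ∑ n ∈ B, δ n • e n‖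

lemma coef_sum {f : ℕ → X →L[ℝ] ℝ} {e : ℕ → X} (hb : BasisSystem f e)
    (S : Finset ℕ) (n : ℕ) :
    f n (∑ m ∈ S, e m) = if n ∈ S then 1 else 0 := by
  rw [map_sum]
  simp only [hb.biorth]
  exact Finset.sum_ite_eq S n fun _ => 1

lemma proj_sum {f : ℕ → X →L[ℝ] ℝ} {e : ℕ → X} (hb : BasisSystem f e)
    {S Λ : Finset ℕ} (hΛ : Λ ⊆ S) :
    proj f e Λ (∑ m ∈ S, e m) = ∑ n ∈ Λ, e n := by
  unfold proj
  refine Finset.sum_congr rfl fun n hn => ?_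
  rw [coef_sum hb, if_pos (hΛ hn), one_smul]

lemma greedy_sum {f : ℕ → X →L[ℝ] ℝ} {e : ℕ → X} (hb : BasisSystem f e)
    {S Λ : Finset ℕ} (hΛ : Λ ⊆ S) :
    GreedySet f (∑ m ∈ S, e m) Λ := by
  intro n hn m _
  rw [coef_sum hb, coef_sum hb, if_pos (hΛ hn)]
  split <;> simp

lemma checkSigma_bddBelow (f : ℕ → X →L[ℝ] ℝ) (e : ℕ → X) (Λ : Finset ℕ)
    (m : ℕ) (x : X) :
    BddBelow {r : ℝ | ∃ I : Finset ℕ,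
      (I = ∅ ∨ ∃ a b : ℕ, a ≤ b ∧ I = Finset.Icc a b ∧ ∀ n ∈ Λ, n ≤ b) ∧
      I.card ≤ m ∧ r = ‖x - proj f e I x‖} :=
  ⟨0, fun r hr => by obtain ⟨I, _, _, rfl⟩ := hr; positivity⟩

lemma checkSigma_nonneg (f : ℕ → X →L[ℝ] ℝ) (e : ℕ → X) (Λ : Finset ℕ)
    (m : ℕ) (x : X) : 0 ≤ checkSigma f e Λ m x := by
  apply le_csInf
  · exact ⟨‖x - proj f e ∅ x‖, ∅, Or.inl rfl, by simp, rfl⟩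
  · intro r hr; obtain ⟨I, _, _, rfl⟩ := hr; positivity

/-- if `‖x - P_Λ x‖ ≤ C σ̌^Λ_m(x)` for all greedy sets `Λ` of
cardinality `m`, then the basis is reverse conservative with constant `C`. -/
theorem stmt_1 [CompleteSpace X] (f : ℕ → X →L[ℝ] ℝ) (e : ℕ → X)
    (hb : BasisSystem f e) (C : ℝ)
    (h : ∀ (x : X) (m : ℕ) (Λ : Finset ℕ), Λ.card = m → GreedySet f x Λ →
      ‖x - proj f e Λ x‖ ≤ C * checkSigma f e Λ m x) :
    RevConservative e C := by
  -- First, derive `0 < C`.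
  have hC : 0 < C := by
    obtain ⟨c₁, c₂, hc₁, hc⟩ := hb.bounded
    set x := ∑ n ∈ ({0, 1} : Finset ℕ), e n with hx
    have hsub : ({0} : Finset ℕ) ⊆ {0, 1} := by simp
    have key := h x 1 {0} (by simp) (greedy_sum hb hsub)
    have h1 : x - proj f e {0} x = e 1 := by
      rw [proj_sum hb hsub, hx, Finset.sum_pair (by norm_num : (0 : ℕ) ≠ 1)]
      simp
    rw [h1] at key
    have hσ := checkSigma_nonneg f e {0} 1 x
    have he1 : 0 < ‖e 1‖ := lt_of_lt_of_le hc₁ (hc 1).1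
    nlinarith
  intro A B hBA hcard
  by_cases hA : A.Nonempty
  · have hB : B.Nonempty := by
      rcases hA with ⟨a, ha⟩
      rcases Finset.eq_empty_or_nonempty B with hB | hB
      · exfalso
        have : 0 < A.card := Finset.card_pos.2 ⟨a, ha⟩
        have h0 : B.card = 0 := by simp [hB]
        omega
      · exact hB
    set a₀ := A.min' hA with ha₀
    set a₁ := A.max' hA with ha₁
    have hAI : A ⊆ Finset.Icc a₀ a₁ := fun n hn =>
      Finset.mem_Icc.2 ⟨A.min'_le n hn, A.le_max' n hn⟩
    set J := Finset.Icc a₀ a₁ \ A with hJ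
    set Λ := B ∪ J with hΛ
    set S := B ∪ Finset.Icc a₀ a₁ with hS
    set x := ∑ n ∈ S, e n with hx
    have hBlt : ∀ b ∈ B, b < a₀ := fun b hb => hBA b hb a₀ (A.min'_mem hA)
    have hBdisj : ∀ b ∈ B, b ∉ Finset.Icc a₀ a₁ := by
      intro b hb hmem
      exact absurd (Finset.mem_Icc.1 hmem).1 (not_le.2 (hBlt b hb))
    have hΛS : Λ ⊆ S := Finset.union_subset_union_right Finset.sdiff_subset
    have hIS : Finset.Icc a₀ a₁ ⊆ S := Finset.subset_union_right
    have key := h x Λ.card Λ rfl (greedy_sum hb hΛS)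
    -- `x - P_Λ x = ∑_{n ∈ A} e n`
    have hSΛ : S \ Λ = A := by
      ext n
      simp only [hS, hΛ, hJ, Finset.mem_sdiff, Finset.mem_union]
      constructor
      · rintro ⟨h1 | h1, h2⟩
        · exact absurd (Or.inl h1) h2
        · by_contra hn
          exact h2 (Or.inr ⟨h1, hn⟩)
      · intro hn
        have hnB : n ∉ B := fun hnB => lt_irrefl n (hBA n hnB n hn)
        exact ⟨Or.inr (hAI hn), by
          rintro (h1 | ⟨_, h2⟩)
          exacts [hnB h1, h2 hn]⟩
    have h1 : x - proj f e Λ x = ∑ n ∈ A, e n := by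
      rw [proj_sum hb hΛS, hx, ← Finset.sum_sdiff hΛS, hSΛ]
      abel
    -- `x - P_I x = ∑_{n ∈ B} e n` for `I = Icc a₀ a₁`
    have hSI : S \ Finset.Icc a₀ a₁ = B := by
      ext n
      simp only [hS, Finset.mem_sdiff, Finset.mem_union]
      constructor
      · rintro ⟨h1 | h1, h2⟩
        exacts [h1, absurd h1 h2]
      · intro hn; exact ⟨Or.inl hn, hBdisj n hn⟩
    have h2 : x - proj f e (Finset.Icc a₀ a₁) x = ∑ n ∈ B, e n := by
      rw [proj_sum hb hIS, hx, ← Finset.sum_sdiff hIS, hSI]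
      abel
    -- card bound : |Icc a₀ a₁| ≤ |Λ|
    have hcardI : (Finset.Icc a₀ a₁).card ≤ Λ.card := by
      have hdisjBJ : Disjoint B J := by
        rw [Finset.disjoint_left]
        intro b hbB hbJ
        exact hBdisj b hbB (Finset.mem_sdiff.1 hbJ).1
      have hcJ : J.card = (Finset.Icc a₀ a₁).card - A.card := Finset.card_sdiff_of_subset hAI
      have hle : A.card ≤ (Finset.Icc a₀ a₁).card := Finset.card_le_card hAI
      have hcΛ : Λ.card = B.card + J.card := Finset.card_union_of_disjoint hdisjBJ
      omega
    -- checkSigma bound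
    have h3 : checkSigma f e Λ Λ.card x ≤ ‖∑ n ∈ B, e n‖ := by
      rw [← h2]
      apply csInf_le (checkSigma_bddBelow f e Λ Λ.card x)
      refine ⟨Finset.Icc a₀ a₁,
        Or.inr ⟨a₀, a₁, A.min'_le _ (A.max'_mem hA), rfl, ?_⟩, hcardI, rfl⟩
      intro n hn
      rcases Finset.mem_union.1 hn with h' | h'
      · exact le_of_lt (lt_of_lt_of_le (hBlt n h') (A.min'_le _ (A.max'_mem hA)))
      · exact (Finset.mem_Icc.1 (Finset.mem_sdiff.1 h').1).2
    calc ‖∑ n ∈ A, e n‖ = ‖x - proj f e Λ x‖ := by rw [h1]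
      _ ≤ C * checkSigma f e Λ Λ.card x := key
      _ ≤ C * ‖∑ n ∈ B, e n‖ := mul_le_mul_of_nonneg_left h3 hC.le
  · rw [Finset.not_nonempty_iff_eq_empty] at hA
    subst hA
    simp only [Finset.sum_empty, norm_zero]
    positivity
end
end

section
/- A basis is reverse partially greedy (RPG) if and only if there exists C ≥ 1 such that ‖x − P_Λ(x)‖ ≤ C·σ̌^Λ_m(x) for all x ∈ X, m ∈ ℕ, and greedy sets Λ of x with |Λ| = m. -/
/-!
If `Λ` is a greedy set of `x` and `I` an admissible interval, then `Λ \ I` is a greedy set of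
`z = x - P_{Λ ∩ I} x`, every element of `Λ \ I` lies below `I \ Λ`, `|I \ Λ| ≤ |Λ \ I|`,
`z - P_{Λ \ I} z = x - P_Λ x` and `z - P_{I \ Λ} z = x - P_I x`; so RPG gives the interval bound
with the same constant.

Conversely, the interval bound with `I = ∅` is suppression quasi-greediness, and tested on the
indicator of `B ∪ [min A, max A]` with greedy set `B ∪ ([min A, max A] \ A)` it is reverse
conservativeness. These two properties give RPG (Dilworth–Khurana): for `A > Λ`, write
`x - P_Λ x = (y - P_Λ y) + P_A x` with `y = x - P_A x`; the coefficients of `x` on `A` are at most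
`α = min_Λ |e_n^*(x)|`, and convexity, sign changes, reverse conservativeness and the truncation
estimate `‖α ∑_Λ sgn(e_n^*(y)) e_n‖ ≲ ‖y‖` bound `‖P_A x‖` by a multiple of `‖y‖`.
-/

open Finset Filter

noncomputable section

variable {X : Type*} [NormedAddCommGroup X] [NormedSpace ℝ X]

theorem le_mul_csInf {S : Set ℝ} (hS : S.Nonempty) {u C : ℝ} (hC : 0 ≤ C)
    (h : ∀ r ∈ S, u ≤ C * r) : u ≤ C * sInf S := by
  rcases hC.eq_or_lt with rfl | hC
  · obtain ⟨r, hr⟩ := hS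
    simpa using h r hr
  · rw [← div_le_iff₀' hC]
    exact le_csInf hS fun r hr => (div_le_iff₀' hC).2 (h r hr)

theorem exists_norm_sum_smul_le_of_abs_le (e : ℕ → X) (D : Finset ℕ) {c : ℕ → ℝ} {α : ℝ}
    (hc : ∀ n ∈ D, |c n| ≤ α) :
    ∃ v : ℕ → ℝ, (∀ n ∈ D, |v n| = α) ∧ ‖∑ n ∈ D, c n • e n‖ ≤ ‖∑ n ∈ D, v n • e n‖ := by
  let L : (D → ℝ) →ₗ[ℝ] X := ∑ i : D, (LinearMap.proj i).smulRight (e i)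
  have hL : ∀ t, L t = ∑ i : D, t i • e i := fun t => by simp [L]
  have hcube : (fun i : D => c i) ∈ convexHull ℝ (Set.univ.pi fun _ => {-α, α}) := by
    rw [convexHull_pi]
    intro i _
    have hα : -α ≤ α := by linarith [abs_nonneg (c i), hc i i.2]
    rw [convexHull_pair, segment_eq_Icc hα]
    exact abs_le.1 (hc i i.2)
  obtain ⟨v, hv, hle⟩ :=
    (convexOn_univ_norm.comp_linearMap L).exists_ge_of_mem_convexHull (Set.subset_univ _) hcube
  refine ⟨fun n => if h : n ∈ D then v ⟨n, h⟩ else 0, fun n hn => ?_, ?_⟩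
  · have hα : 0 ≤ α := (abs_nonneg _).trans (hc n hn)
    simp only [dif_pos hn]
    rcases hv ⟨n, hn⟩ (Set.mem_univ _) with h | h
    · rw [h, abs_neg, abs_of_nonneg hα]
    · rw [Set.mem_singleton_iff.1 h, abs_of_nonneg hα]
  · rw [← sum_coe_sort D, ← sum_coe_sort D]
    simpa [hL] using hle

section

variable {f : ℕ → X →L[ℝ] ℝ} {e : ℕ → X}

theorem proj_congr {A : Finset ℕ} {x y : X} (h : ∀ n ∈ A, f n x = f n y) :
    proj f e A x = proj f e A y :=
  sum_congr rfl fun n hn => by rw [h n hn]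

theorem proj_union {A B : Finset ℕ} (h : Disjoint A B) (x : X) :
    proj f e (A ∪ B) x = proj f e A x + proj f e B x :=
  sum_union h

theorem apply_sum_smul (hfe : ∀ n m, f n (e m) = if n = m then (1 : ℝ) else 0)
    (D : Finset ℕ) (s : ℕ → ℝ) (k : ℕ) :
    f k (∑ n ∈ D, s n • e n) = if k ∈ D then s k else 0 := by
  simp [hfe]

theorem apply_sub_proj (hfe : ∀ n m, f n (e m) = if n = m then (1 : ℝ) else 0)
    (A : Finset ℕ) (x : X) (k : ℕ) :
    f k (x - proj f e A x) = if k ∈ A then 0 else f k x := by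
  rw [map_sub, proj, apply_sum_smul hfe]
  split_ifs <;> simp

theorem sub_proj_sub_proj (hfe : ∀ n m, f n (e m) = if n = m then (1 : ℝ) else 0)
    {A B : Finset ℕ} (h : Disjoint A B) (x : X) :
    x - proj f e A x - proj f e B (x - proj f e A x) = x - proj f e (A ∪ B) x := by
  have hB : proj f e B (x - proj f e A x) = proj f e B x := proj_congr fun n hn => by
    rw [apply_sub_proj hfe, if_neg (disjoint_right.1 h hn)]
  rw [hB, proj_union h, sub_sub]

theorem sum_smul_sub_proj (hfe : ∀ n m, f n (e m) = if n = m then (1 : ℝ) else 0)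
    {T D : Finset ℕ} (hTD : T ⊆ D) (s : ℕ → ℝ) :
    ∑ n ∈ D, s n • e n - proj f e T (∑ n ∈ D, s n • e n) = ∑ n ∈ D \ T, s n • e n := by
  have hT : proj f e T (∑ n ∈ D, s n • e n) = ∑ n ∈ T, s n • e n :=
    sum_congr rfl fun n hn => by rw [apply_sum_smul hfe, if_pos (hTD hn)]
  rw [hT, ← sum_sdiff hTD, add_sub_cancel_right]

theorem greedySet_sum_smul (hfe : ∀ n m, f n (e m) = if n = m then (1 : ℝ) else 0)
    {T D : Finset ℕ} (hTD : T ⊆ D) {s : ℕ → ℝ} {a : ℝ} (hs : ∀ n ∈ D, |s n| = a) :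
    GreedySet f (∑ n ∈ D, s n • e n) T := by
  intro n hn k _
  rw [apply_sum_smul hfe, apply_sum_smul hfe, if_pos (hTD hn), hs n (hTD hn)]
  split_ifs with hk
  · exact (hs k hk).le
  · rw [abs_zero, ← hs n (hTD hn)]
    exact abs_nonneg _

theorem GreedySet.sub_proj (hfe : ∀ n m, f n (e m) = if n = m then (1 : ℝ) else 0)
    {x : X} {Λ : Finset ℕ} (hΛ : GreedySet f x Λ) (A : Finset ℕ) :
    GreedySet f (x - proj f e A x) (Λ \ A) := by
  intro n hn k hk
  rw [Finset.mem_sdiff] at hn hk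
  rw [apply_sub_proj hfe, apply_sub_proj hfe, if_neg hn.2]
  split_ifs with hkA
  · simp
  · exact hΛ n hn.1 k fun hkΛ => hk ⟨hkΛ, hkA⟩

theorem checkSigma_le {Λ I : Finset ℕ} {m : ℕ}
    (hI : I = ∅ ∨ ∃ a b : ℕ, a ≤ b ∧ I = Icc a b ∧ ∀ n ∈ Λ, n ≤ b) (hm : I.card ≤ m) (x : X) :
    checkSigma f e Λ m x ≤ ‖x - proj f e I x‖ :=
  csInf_le ⟨0, by rintro r ⟨J, -, -, rfl⟩; exact norm_nonneg _⟩ ⟨I, hI, hm, rfl⟩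

theorem le_mul_checkSigma {Λ : Finset ℕ} {m : ℕ} {x : X} {u C : ℝ} (hC : 0 ≤ C)
    (h : ∀ I : Finset ℕ, (I = ∅ ∨ ∃ a b : ℕ, a ≤ b ∧ I = Icc a b ∧ ∀ n ∈ Λ, n ≤ b) →
      I.card ≤ m → u ≤ C * ‖x - proj f e I x‖) :
    u ≤ C * checkSigma f e Λ m x := by
  unfold checkSigma
  refine le_mul_csInf ?_ hC ?_
  · exact ⟨_, ∅, Or.inl rfl, by simp, rfl⟩
  · rintro _ ⟨I, hI, hm, rfl⟩
    exact h I hI hm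

theorem revSigma_le {Λ A : Finset ℕ} {m : ℕ} (hm : A.card ≤ m) (hΛA : ∀ n ∈ Λ, ∀ a ∈ A, n < a)
    (x : X) : revSigma f e Λ m x ≤ ‖x - proj f e A x‖ :=
  csInf_le ⟨0, by rintro r ⟨B, -, -, rfl⟩; exact norm_nonneg _⟩ ⟨A, hm, hΛA, rfl⟩

theorem le_mul_revSigma {Λ : Finset ℕ} {m : ℕ} {x : X} {u C : ℝ} (hC : 0 ≤ C)
    (h : ∀ A : Finset ℕ, A.card ≤ m → (∀ n ∈ Λ, ∀ a ∈ A, n < a) →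
      u ≤ C * ‖x - proj f e A x‖) :
    u ≤ C * revSigma f e Λ m x := by
  unfold revSigma
  refine le_mul_csInf ?_ hC ?_
  · exact ⟨_, ∅, by simp, by simp, rfl⟩
  · rintro _ ⟨A, hm, hΛA, rfl⟩
    exact h A hm hΛA

theorem rpgII_one_iff {C : ℝ} :
    RPGII f e 1 C ↔ ∀ (x : X) (m : ℕ) (Λ : Finset ℕ), Λ.card = m → GreedySet f x Λ →
      ‖x - proj f e Λ x‖ ≤ C * checkSigma f e Λ m x := by
  simp [RPGII]

theorem RPG.norm_sub_proj_le (hfe : ∀ n m, f n (e m) = if n = m then (1 : ℝ) else 0)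
    {C : ℝ} (h : RPG f e C) (hC : 0 ≤ C) {x : X} {Λ B : Finset ℕ} (hΛ : GreedySet f x Λ)
    (hcard : B.card ≤ Λ.card) (hlt : ∀ n ∈ Λ \ B, ∀ k ∈ B \ Λ, n < k) :
    ‖x - proj f e Λ x‖ ≤ C * ‖x - proj f e B x‖ := by
  set z := x - proj f e (Λ ∩ B) x
  have hzΛ : z - proj f e (Λ \ B) z = x - proj f e Λ x := by
    rw [sub_proj_sub_proj hfe (disjoint_sdiff_inter Λ B).symm, union_comm, sdiff_union_inter]
  have hzB : z - proj f e (B \ Λ) z = x - proj f e B x := by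
    rw [sub_proj_sub_proj hfe, inter_comm, union_comm, sdiff_union_inter]
    exact disjoint_left.2 fun n hn hn' => (mem_sdiff.1 hn').2 (mem_inter.1 hn).1
  have hgreedy : GreedySet f z (Λ \ B) := by
    simpa only [sdiff_inter_self_left] using hΛ.sub_proj hfe (Λ ∩ B)
  have hcard' : (B \ Λ).card ≤ (Λ \ B).card := by
    have := card_sdiff_add_card_inter B Λ
    have := card_sdiff_add_card_inter Λ B
    rw [inter_comm] at this
    omega
  calc ‖x - proj f e Λ x‖ ≤ C * revSigma f e (Λ \ B) (Λ \ B).card z := hzΛ ▸ h z _ _ rfl hgreedy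
    _ ≤ C * ‖x - proj f e B x‖ := by
      rw [← hzB]
      exact mul_le_mul_of_nonneg_left (revSigma_le hcard' hlt z) hC

theorem RPG.rpgII_one (hfe : ∀ n m, f n (e m) = if n = m then (1 : ℝ) else 0)
    {C : ℝ} (h : RPG f e C) (hC : 0 ≤ C) : RPGII f e 1 C := by
  rw [rpgII_one_iff]
  rintro x m Λ rfl hΛ
  refine le_mul_checkSigma hC ?_
  rintro I (rfl | ⟨a, b, -, rfl, hΛb⟩) hI
  · exact h.norm_sub_proj_le hfe hC hΛ hI (by simp)
  · refine h.norm_sub_proj_le hfe hC hΛ hI fun n hn k hk => ?_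
    simp only [Finset.mem_sdiff, Finset.mem_Icc] at hn hk
    have := hΛb n hn.1
    omega

theorem RPGII.suppQG {C : ℝ} (h : RPGII f e 1 C) (hC : 0 ≤ C) : SuppQG f e C := by
  intro x Λ hΛ
  calc ‖x - proj f e Λ x‖ ≤ C * checkSigma f e Λ Λ.card x := rpgII_one_iff.1 h x _ Λ rfl hΛ
    _ ≤ C * ‖x‖ := by
      refine mul_le_mul_of_nonneg_left ?_ hC
      simpa [proj] using checkSigma_le (f := f) (e := e) (Λ := Λ) (Or.inl rfl) (Nat.zero_le _) x

theorem RPGII.norm_sum_sdiff_le (hfe : ∀ n m, f n (e m) = if n = m then (1 : ℝ) else 0)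
    {C : ℝ} (h : RPGII f e 1 C) (hC : 0 ≤ C) {S Λ I : Finset ℕ} (hΛ : Λ ⊆ S) (hI : I ⊆ S)
    (hadm : I = ∅ ∨ ∃ a b : ℕ, a ≤ b ∧ I = Icc a b ∧ ∀ n ∈ Λ, n ≤ b) (hcard : I.card ≤ Λ.card) :
    ‖∑ n ∈ S \ Λ, e n‖ ≤ C * ‖∑ n ∈ S \ I, e n‖ := by
  set x : X := ∑ n ∈ S, (1 : ℝ) • e n
  have key : ‖x - proj f e Λ x‖ ≤ C * ‖x - proj f e I x‖ :=
    (rpgII_one_iff.1 h x _ Λ rfl (greedySet_sum_smul hfe hΛ fun _ _ => abs_one)).trans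
      (mul_le_mul_of_nonneg_left (checkSigma_le hadm hcard x) hC)
  rw [sum_smul_sub_proj hfe hΛ, sum_smul_sub_proj hfe hI] at key
  simpa only [one_smul] using key

theorem RPGII.revConservative (hfe : ∀ n m, f n (e m) = if n = m then (1 : ℝ) else 0)
    {C : ℝ} (h : RPGII f e 1 C) (hC : 0 ≤ C) : RevConservative e C := by
  intro A B hBA hcard
  rcases A.eq_empty_or_nonempty with rfl | hA
  · simpa using mul_nonneg hC (norm_nonneg _)
  set a := A.min' hA
  set b := A.max' hA
  have hBa : ∀ n ∈ B, n < a := fun n hn => hBA n hn a (A.min'_mem hA)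
  have hAI : ∀ n ∈ A, a ≤ n ∧ n ≤ b := fun n hn => ⟨A.min'_le n hn, A.le_max' n hn⟩
  -- the gaps of `A` go into the greedy set, so that the competing set becomes an interval
  set Λ := B ∪ (Icc a b \ A)
  have hΛA : (B ∪ Icc a b) \ Λ = A := by
    ext n
    have := hBa n
    have := hAI n
    simp only [Λ, Finset.mem_sdiff, mem_union, Finset.mem_Icc]
    grind
  have hIB : (B ∪ Icc a b) \ Icc a b = B := by
    ext n
    have := hBa n
    simp only [Finset.mem_sdiff, mem_union, Finset.mem_Icc]
    grind
  have hcardI : (Icc a b).card ≤ Λ.card := by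
    have hdisj : Disjoint B (Icc a b \ A) := disjoint_left.2 fun n hn hn' => by
      have := (mem_Icc.1 (mem_sdiff.1 hn').1).1
      have := hBa n hn
      omega
    have hAI' : A ⊆ Icc a b := fun n hn => mem_Icc.2 (hAI n hn)
    rw [card_union_of_disjoint hdisj, card_sdiff_of_subset hAI']
    have := card_le_card hAI'
    omega
  have hadm : ∀ n ∈ Λ, n ≤ b := by
    intro n hn
    rcases mem_union.1 hn with hn | hn
    · exact (hBa n hn).le.trans (A.min'_le_max' hA)
    · exact (mem_Icc.1 (mem_sdiff.1 hn).1).2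
  simpa only [hΛA, hIB] using h.norm_sum_sdiff_le hfe hC (Λ := Λ)
    (union_subset_union subset_rfl sdiff_subset) subset_union_right
    (Or.inr ⟨a, b, A.min'_le_max' hA, rfl, hadm⟩) hcardI

theorem SuppQG.qg {C : ℝ} (h : SuppQG f e C) : QG f e (1 + C) := by
  intro x Λ hΛ
  calc ‖proj f e Λ x‖ = ‖x - (x - proj f e Λ x)‖ := by rw [sub_sub_cancel]
    _ ≤ ‖x‖ + C * ‖x‖ := norm_sub_le_of_le le_rfl (h x Λ hΛ)
    _ = (1 + C) * ‖x‖ := by ring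

/-- Abel summation against the greedy sets `{n ∈ B : |e_n^*(y)| ≥ t}`. -/
theorem QG.norm_sum_smul_sub_smul_proj_le {K : ℝ} (hK : QG f e K) (hK0 : 0 ≤ K) {y : X}
    {w : ℕ → ℝ} {ν : ℝ} (B : Finset ℕ) (μ : ℝ) (hB : GreedySet f y B) (hνμ : ν ≤ μ)
    (hw : ∀ n ∈ B, ν ≤ w n ∧ w n ≤ μ)
    (hanti : ∀ n ∈ B, ∀ k ∈ B, |f n y| ≤ |f k y| → w k ≤ w n) :
    ‖∑ n ∈ B, w n • f n y • e n - μ • proj f e B y‖ ≤ (μ - ν) * (K * ‖y‖) := by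
  induction B using Finset.strongInduction generalizing μ with
  | H B ih =>
  rcases B.eq_empty_or_nonempty with rfl | hne
  · simpa [proj] using mul_nonneg (sub_nonneg.2 hνμ) (mul_nonneg hK0 (norm_nonneg y))
  obtain ⟨n₀, hn₀, hmin⟩ := B.exists_min_image (fun n => |f n y|) hne
  have hB' : GreedySet f y (B.erase n₀) := by
    intro n hn k hk
    by_cases hkn₀ : k = n₀
    · exact hkn₀ ▸ hmin n (mem_of_mem_erase hn)
    · exact hB n (mem_of_mem_erase hn) k fun hkB => hk (mem_erase.2 ⟨hkn₀, hkB⟩)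
  have hIH := ih (B.erase n₀) (erase_ssubset hn₀) (w n₀) hB' (hw n₀ hn₀).1
    (fun n hn => ⟨(hw n (mem_of_mem_erase hn)).1,
      hanti n₀ hn₀ n (mem_of_mem_erase hn) (hmin n (mem_of_mem_erase hn))⟩)
    fun n hn k hk => hanti n (mem_of_mem_erase hn) k (mem_of_mem_erase hk)
  have hsplit : ∑ n ∈ B, w n • f n y • e n - μ • proj f e B y =
      (∑ n ∈ B.erase n₀, w n • f n y • e n - w n₀ • proj f e (B.erase n₀) y) +
        (w n₀ - μ) • proj f e B y := by
    simp only [proj, ← add_sum_erase B _ hn₀]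
    module
  have hlast : ‖(w n₀ - μ) • proj f e B y‖ ≤ (μ - w n₀) * (K * ‖y‖) := by
    rw [norm_smul, Real.norm_eq_abs, abs_sub_comm, abs_of_nonneg (sub_nonneg.2 (hw n₀ hn₀).2)]
    exact mul_le_mul_of_nonneg_left (hK y B hB) (sub_nonneg.2 (hw n₀ hn₀).2)
  calc _ ≤ (w n₀ - ν) * (K * ‖y‖) + (μ - w n₀) * (K * ‖y‖) :=
        hsplit ▸ norm_add_le_of_le hIH hlast
    _ = (μ - ν) * (K * ‖y‖) := by ring

theorem QG.norm_sum_threshold_le {K : ℝ} (hK : QG f e K) (hK0 : 0 ≤ K) {y : X} {B : Finset ℕ}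
    (hB : GreedySet f y B) {α : ℝ} (hα : 0 ≤ α) (hαB : ∀ n ∈ B, α ≤ |f n y|) :
    ‖∑ n ∈ B, (α / |f n y| * f n y) • e n‖ ≤ 2 * K * ‖y‖ := by
  have hw : ∀ n ∈ B, 0 ≤ α / |f n y| ∧ α / |f n y| ≤ 1 := fun n hn =>
    ⟨div_nonneg hα (abs_nonneg _), div_le_one_of_le₀ (hαB n hn) (abs_nonneg _)⟩
  have hanti : ∀ n ∈ B, ∀ k ∈ B, |f n y| ≤ |f k y| → α / |f k y| ≤ α / |f n y| := by
    intro n hn k _ hnk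
    rcases (abs_nonneg (f n y)).eq_or_lt with h0 | hpos
    · simp [le_antisymm (h0 ▸ hαB n hn) hα]
    · exact div_le_div_of_nonneg_left hα hpos hnk
  have habel := hK.norm_sum_smul_sub_smul_proj_le hK0 B 1 hB zero_le_one hw hanti
  simp only [smul_smul, one_smul] at habel
  calc _ = ‖(∑ n ∈ B, (α / |f n y| * f n y) • e n - proj f e B y) + proj f e B y‖ := by
        rw [sub_add_cancel]
    _ ≤ (1 - 0) * (K * ‖y‖) + K * ‖y‖ := norm_add_le_of_le habel (hK y B hB)
    _ = 2 * K * ‖y‖ := by ring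

theorem SuppQG.norm_sum_smul_le_of_abs_eq (hfe : ∀ n m, f n (e m) = if n = m then (1 : ℝ) else 0)
    {C : ℝ} (hq : SuppQG f e C) {D : Finset ℕ} {t s : ℕ → ℝ} {a : ℝ}
    (ht : ∀ n ∈ D, |t n| = a) (hs : ∀ n ∈ D, |s n| = a) :
    ‖∑ n ∈ D, t n • e n‖ ≤ 2 * C * ‖∑ n ∈ D, s n • e n‖ := by
  set z := ∑ n ∈ D, s n • e n
  set S := D.filter fun n => t n = s n
  have hSD : S ⊆ D := filter_subset _ _
  have hS : ∑ n ∈ S, t n • e n = z - proj f e (D \ S) z := by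
    rw [sum_smul_sub_proj hfe sdiff_subset, Finset.sdiff_sdiff_eq_self hSD]
    exact sum_congr rfl fun n hn => by rw [(mem_filter.1 hn).2]
  have hS' : ∑ n ∈ D \ S, t n • e n = -(z - proj f e S z) := by
    rw [sum_smul_sub_proj hfe hSD, ← sum_neg_distrib]
    refine sum_congr rfl fun n hn => ?_
    obtain ⟨hnD, hnS⟩ := mem_sdiff.1 hn
    have hts : t n = -s n :=
      ((abs_eq_abs.1 ((ht n hnD).trans (hs n hnD).symm)).resolve_left
        fun h => hnS (mem_filter.2 ⟨hnD, h⟩))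
    rw [hts, neg_smul]
  calc ‖∑ n ∈ D, t n • e n‖ = ‖-(z - proj f e S z) + (z - proj f e (D \ S) z)‖ := by
        rw [← sum_sdiff hSD, hS, hS']
    _ ≤ C * ‖z‖ + C * ‖z‖ := norm_add_le_of_le
        (by rw [norm_neg]; exact hq z S (greedySet_sum_smul hfe hSD hs))
        (hq z _ (greedySet_sum_smul hfe sdiff_subset hs))
    _ = 2 * C * ‖z‖ := by ring

theorem SuppQG.norm_sum_smul_le_of_revConservative (hfe : ∀ n m, f n (e m) = if n = m then (1 : ℝ) else 0)
    {C : ℝ} (hq : SuppQG f e C) (hC : 0 ≤ C) (hrc : RevConservative e C) {y : X}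
    {B D : Finset ℕ} (hB : GreedySet f y B) (hBD : ∀ b ∈ B, ∀ d ∈ D, b < d)
    (hcard : D.card ≤ B.card) {c : ℕ → ℝ} {α : ℝ} (hα : 0 ≤ α) (hc : ∀ n ∈ D, |c n| ≤ α)
    (hαB : ∀ k ∈ B, α ≤ |f k y|) :
    ‖∑ n ∈ D, c n • e n‖ ≤ 8 * C ^ 3 * (1 + C) * ‖y‖ := by
  obtain ⟨v, hv, hcv⟩ := exists_norm_sum_smul_le_of_abs_le e D hc
  have hthreshold : ∀ n ∈ B, |α / |f n y| * f n y| = α := by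
    intro n hn
    rcases eq_or_ne (f n y) 0 with h0 | h0
    · simp [h0, le_antisymm (by simpa [h0] using hαB n hn) hα]
    · rw [abs_mul, abs_div, abs_abs, abs_of_nonneg hα, div_mul_cancel₀ _ (abs_ne_zero.2 h0)]
  have hrc' : ‖∑ n ∈ D, α • e n‖ ≤ C * ‖∑ n ∈ B, α • e n‖ := by
    rw [← smul_sum, ← smul_sum, norm_smul, norm_smul, Real.norm_of_nonneg hα, mul_left_comm]
    exact mul_le_mul_of_nonneg_left (hrc D B hBD hcard) hα
  calc ‖∑ n ∈ D, c n • e n‖ ≤ ‖∑ n ∈ D, v n • e n‖ := hcv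
    _ ≤ 2 * C * ‖∑ n ∈ D, α • e n‖ :=
        hq.norm_sum_smul_le_of_abs_eq hfe hv fun _ _ => abs_of_nonneg hα
    _ ≤ 2 * C * (C * ‖∑ n ∈ B, α • e n‖) := by gcongr
    _ ≤ 2 * C * (C * (2 * C * ‖∑ n ∈ B, (α / |f n y| * f n y) • e n‖)) := by
        gcongr
        exact hq.norm_sum_smul_le_of_abs_eq hfe (fun _ _ => abs_of_nonneg hα) hthreshold
    _ ≤ 2 * C * (C * (2 * C * (2 * (1 + C) * ‖y‖))) := by
        gcongr
        exact hq.qg.norm_sum_threshold_le (by positivity) hB hα hαB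
    _ = 8 * C ^ 3 * (1 + C) * ‖y‖ := by ring

theorem rpg_of_suppQG_of_revConservative
    (hfe : ∀ n m, f n (e m) = if n = m then (1 : ℝ) else 0) {C : ℝ} (hC : 0 ≤ C)
    (hq : SuppQG f e C) (hrc : RevConservative e C) : RPG f e (C + 8 * C ^ 3 * (1 + C)) := by
  intro x m Λ hm hΛ
  refine le_mul_revSigma (by positivity) fun A hA hΛA => ?_
  have hdisj : Disjoint Λ A := disjoint_left.2 fun n hnΛ hnA => lt_irrefl n (hΛA n hnΛ n hnA)
  set y := x - proj f e A x
  have hΛy : GreedySet f y Λ := by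
    simpa only [sdiff_eq_self_of_disjoint hdisj] using hΛ.sub_proj hfe A
  have hsplit : x - proj f e Λ x = (y - proj f e Λ y) + proj f e A x := by
    rw [sub_proj_sub_proj hfe hdisj.symm, union_comm, proj_union hdisj]
    abel
  have hA_le : ‖proj f e A x‖ ≤ 8 * C ^ 3 * (1 + C) * ‖y‖ := by
    rcases Λ.eq_empty_or_nonempty with rfl | hne
    · have hA0 : A = ∅ := by simpa [← hm] using hA
      simpa [hA0, proj] using by positivity
    obtain ⟨k₀, hk₀, hmin⟩ := Λ.exists_min_image (fun n => |f n x|) hne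
    refine hq.norm_sum_smul_le_of_revConservative hfe hC hrc (c := fun n => f n x) hΛy hΛA (hm ▸ hA)
      (abs_nonneg _) (fun n hn => hΛ k₀ hk₀ n (disjoint_right.1 hdisj hn)) fun k hk => ?_
    rw [apply_sub_proj hfe, if_neg (disjoint_left.1 hdisj hk)]
    exact hmin k hk
  calc ‖x - proj f e Λ x‖ ≤ ‖y - proj f e Λ y‖ + ‖proj f e A x‖ := hsplit ▸ norm_add_le _ _
    _ ≤ C * ‖y‖ + 8 * C ^ 3 * (1 + C) * ‖y‖ := add_le_add (hq y Λ hΛy) hA_le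
    _ = (C + 8 * C ^ 3 * (1 + C)) * ‖x - proj f e A x‖ := by ring

end

theorem stmt_3_general (f : ℕ → X →L[ℝ] ℝ) (e : ℕ → X)
    (hb : BasisSystem f e) :
    (∃ C : ℝ, 1 ≤ C ∧ RPG f e C) ↔
      (∃ C : ℝ, 1 ≤ C ∧ ∀ (x : X) (m : ℕ) (Λ : Finset ℕ), Λ.card = m →
        GreedySet f x Λ → ‖x - proj f e Λ x‖ ≤ C * checkSigma f e Λ m x) := by
  constructor
  · rintro ⟨C, hC, hrpg⟩
    exact ⟨C, hC, rpgII_one_iff.1 (hrpg.rpgII_one hb.biorth (by linarith))⟩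
  · rintro ⟨C, hC, hcheck⟩
    have hC0 : 0 ≤ C := by linarith
    have hrpgII : RPGII f e 1 C := rpgII_one_iff.2 hcheck
    refine ⟨C + 8 * C ^ 3 * (1 + C), by nlinarith [pow_nonneg hC0 3],
      rpg_of_suppQG_of_revConservative hb.biorth hC0 (hrpgII.suppQG hC0)
        (hrpgII.revConservative hb.biorth hC0)⟩

/-- a basis is RPG iff it satisfies the interval-based condition. -/
theorem stmt_3 [CompleteSpace X] (f : ℕ → X →L[ℝ] ℝ) (e : ℕ → X)
    (hb : BasisSystem f e) :
    (∃ C : ℝ, 1 ≤ C ∧ RPG f e C) ↔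
      (∃ C : ℝ, 1 ≤ C ∧ ∀ (x : X) (m : ℕ) (Λ : Finset ℕ), Λ.card = m →
        GreedySet f x Λ → ‖x - proj f e Λ x‖ ≤ C * checkSigma f e Λ m x) :=
  stmt_3_general f e hb
end
end

section
/- A basis is partially greedy if and only if there exists C ≥ 1 such that ‖x − P_Λ(x)‖ ≤ C·σ̂^Λ_m(x) for all x ∈ X, m ∈ ℕ, and greedy sets Λ of x with |Λ| = m, where σ̂^Λ_m(x) := inf{‖x − P_I(x)‖ : I = ∅ or I an interval with min I ≤ Λ and |I| ≤ m}. -/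
open Finset Filter

noncomputable section

variable {X : Type*} [NormedAddCommGroup X] [NormedSpace ℝ X]

/-- Partially greedy with constant `C`. -/
def PG (f : ℕ → X →L[ℝ] ℝ) (e : ℕ → X) (C : ℝ) : Prop :=
  ∀ (x : X) (m : ℕ) (Λ : Finset ℕ), Λ.card = m → GreedySet f x Λ →
    ‖x - proj f e Λ x‖ ≤
      C * sInf {r : ℝ | ∃ k ≤ m, r = ‖x - proj f e (Finset.range k) x‖}

section AuxPG

variable (f : ℕ → X →L[ℝ] ℝ) (e : ℕ → X)

lemma coeff_sum (hb : ∀ n m, f n (e m) = if n = m then (1 : ℝ) else 0)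
    (c : ℕ → ℝ) (S : Finset ℕ) (n : ℕ) :
    f n (∑ k ∈ S, c k • e k) = if n ∈ S then c n else 0 := by
  rw [map_sum]
  simp only [map_smul, hb, smul_eq_mul, mul_ite, mul_one, mul_zero]
  simp [Finset.sum_ite_eq]

lemma proj_sum_s4 (hb : ∀ n m, f n (e m) = if n = m then (1 : ℝ) else 0)
    (c : ℕ → ℝ) (S T : Finset ℕ) :
    proj f e T (∑ k ∈ S, c k • e k) = ∑ k ∈ T ∩ S, c k • e k := by
  simp only [proj, coeff_sum f e hb, ite_smul, zero_smul, Finset.sum_ite_mem]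

lemma sum_sub_proj (hb : ∀ n m, f n (e m) = if n = m then (1 : ℝ) else 0)
    (c : ℕ → ℝ) (S T : Finset ℕ) :
    (∑ k ∈ S, c k • e k) - proj f e T (∑ k ∈ S, c k • e k) = ∑ k ∈ S \ T, c k • e k := by
  have h1 : ∑ k ∈ S \ T, c k • e k + ∑ k ∈ S ∩ T, c k • e k = ∑ k ∈ S, c k • e k := by
    rw [← Finset.sdiff_inter_self_left S T]
    exact Finset.sum_sdiff Finset.inter_subset_left
  rw [proj_sum_s4 f e hb, Finset.inter_comm, ← h1]
  abel

lemma coeff_sub_proj (hb : ∀ n m, f n (e m) = if n = m then (1 : ℝ) else 0)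
    (x : X) (I : Finset ℕ) (n : ℕ) :
    f n (x - proj f e I x) = if n ∈ I then 0 else f n x := by
  have h : f n (proj f e I x) = if n ∈ I then f n x else 0 :=
    coeff_sum f e hb (fun k => f k x) I n
  rw [map_sub, h]
  split <;> simp

lemma decomp (hb : ∀ n m, f n (e m) = if n = m then (1 : ℝ) else 0)
    (x : X) (Λ I : Finset ℕ) :
    x - proj f e Λ x =
      ((x - proj f e I x) - proj f e (Λ \ I) (x - proj f e I x)) + proj f e (I \ Λ) x := by
  have hy : proj f e (Λ \ I) (x - proj f e I x) = proj f e (Λ \ I) x := by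
    refine Finset.sum_congr rfl fun n hn => ?_
    rw [coeff_sub_proj f e hb, if_neg (Finset.mem_sdiff.mp hn).2]
  rw [hy]
  have key : proj f e Λ x + proj f e (I \ Λ) x = proj f e I x + proj f e (Λ \ I) x := by
    unfold proj
    rw [← Finset.sum_union Finset.disjoint_sdiff, ← Finset.sum_union Finset.disjoint_sdiff,
      Finset.union_sdiff_self_eq_union, Finset.union_sdiff_self_eq_union, Finset.union_comm]
  have key2 : proj f e Λ x =
      proj f e I x + proj f e (Λ \ I) x - proj f e (I \ Λ) x := by
    rw [← key]; abel
  rw [key2]; abel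

lemma convex_signs (α M : ℝ) (hα : 0 ≤ α) (A : Finset ℕ) :
    ∀ (v : X) (c : ℕ → ℝ), (∀ n ∈ A, |c n| ≤ α) →
      (∀ ε : ℕ → ℝ, (∀ n, ε n = 1 ∨ ε n = -1) →
        ‖v + ∑ n ∈ A, (ε n * α) • e n‖ ≤ M) →
      ‖v + ∑ n ∈ A, c n • e n‖ ≤ M := by
  induction A using Finset.induction_on with
  | empty =>
    intro v c _ h
    simpa using h (fun _ => 1) (fun _ => Or.inl rfl)
  | @insert j B hj ih =>
    intro v c hc hε
    have hjc : |c j| ≤ α := hc j (Finset.mem_insert_self j B)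
    set t : ℝ := if α = 0 then 1 else (c j + α) / (2 * α) with ht
    have habs : -α ≤ c j ∧ c j ≤ α := abs_le.mp hjc
    have ht0 : 0 ≤ t := by
      rw [ht]; split
      · norm_num
      · have hαpos : 0 < α := lt_of_le_of_ne hα (Ne.symm ‹α ≠ 0›)
        apply div_nonneg (by linarith [habs.1]) (by linarith)
    have ht1 : t ≤ 1 := by
      rw [ht]; split
      · norm_num
      · have hαpos : 0 < α := lt_of_le_of_ne hα (Ne.symm ‹α ≠ 0›)
        rw [div_le_one (by linarith)]; linarith [habs.2]
    have hcj : t * α + (1 - t) * (-α) = c j := by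
      rw [ht]; split
      · have h0 : α = 0 := ‹α = 0›
        have : c j = 0 := by
          have := hjc; rw [h0] at this
          exact abs_eq_zero.mp (le_antisymm this (abs_nonneg _))
        rw [h0, this]; ring
      · have hαpos : 0 < α := lt_of_le_of_ne hα (Ne.symm ‹α ≠ 0›)
        field_simp
        ring
    have hu1 : ‖(v + α • e j) + ∑ n ∈ B, c n • e n‖ ≤ M := by
      refine ih (v + α • e j) c (fun n hn => hc n (Finset.mem_insert_of_mem hn)) ?_
      intro ε hε'
      have h := hε (Function.update ε j 1)
        (fun n => by rcases eq_or_ne n j with rfl | hne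
                     · simp
                     · simpa [Function.update_of_ne hne] using hε' n)
      rw [Finset.sum_insert hj] at h
      simp only [Function.update_self, one_mul] at h
      have hsum : ∑ n ∈ B, (Function.update ε j 1 n * α) • e n
          = ∑ n ∈ B, (ε n * α) • e n := by
        refine Finset.sum_congr rfl fun n hn => ?_
        rw [Function.update_of_ne (by rintro rfl; exact hj hn)]
      rw [hsum] at h
      rw [add_assoc]
      exact h
    have hu2 : ‖(v + (-α) • e j) + ∑ n ∈ B, c n • e n‖ ≤ M := by
      refine ih (v + (-α) • e j) c (fun n hn => hc n (Finset.mem_insert_of_mem hn)) ?_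
      intro ε hε'
      have h := hε (Function.update ε j (-1))
        (fun n => by rcases eq_or_ne n j with rfl | hne
                     · simp
                     · simpa [Function.update_of_ne hne] using hε' n)
      rw [Finset.sum_insert hj] at h
      simp only [Function.update_self, neg_one_mul] at h
      have hsum : ∑ n ∈ B, (Function.update ε j (-1) n * α) • e n
          = ∑ n ∈ B, (ε n * α) • e n := by
        refine Finset.sum_congr rfl fun n hn => ?_
        rw [Function.update_of_ne (by rintro rfl; exact hj hn)]
      rw [hsum] at h
      rw [add_assoc]
      simpa [neg_smul] using h
    have hrw : v + ∑ n ∈ insert j B, c n • e n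
        = t • ((v + α • e j) + ∑ n ∈ B, c n • e n)
          + (1 - t) • ((v + (-α) • e j) + ∑ n ∈ B, c n • e n) := by
      rw [Finset.sum_insert hj, ← hcj]
      module
    rw [hrw]
    calc ‖t • ((v + α • e j) + ∑ n ∈ B, c n • e n)
          + (1 - t) • ((v + (-α) • e j) + ∑ n ∈ B, c n • e n)‖
        ≤ t * ‖(v + α • e j) + ∑ n ∈ B, c n • e n‖
          + (1 - t) * ‖(v + (-α) • e j) + ∑ n ∈ B, c n • e n‖ := by
          refine (norm_add_le _ _).trans ?_
          rw [norm_smul, norm_smul, Real.norm_of_nonneg ht0,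
            Real.norm_of_nonneg (by linarith)]
      _ ≤ t * M + (1 - t) * M := by
          gcongr <;> linarith
      _ = M := by ring

lemma pg_supp {C : ℝ} (hC : 1 ≤ C) (hpg : PG f e C) (y : X) (Γ : Finset ℕ)
    (hΓ : GreedySet f y Γ) : ‖y - proj f e Γ y‖ ≤ C * ‖y‖ := by
  have h := hpg y Γ.card Γ rfl hΓ
  refine h.trans ?_
  have hmem : ‖y‖ ∈ {r : ℝ | ∃ k ≤ Γ.card, r = ‖y - proj f e (Finset.range k) y‖} :=
    ⟨0, Nat.zero_le _, by simp [proj]⟩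
  have hbdd : BddBelow {r : ℝ | ∃ k ≤ Γ.card, r = ‖y - proj f e (Finset.range k) y‖} :=
    ⟨0, fun r ⟨k, _, hr⟩ => hr ▸ norm_nonneg _⟩
  exact mul_le_mul_of_nonneg_left (csInf_le hbdd hmem) (by linarith)

end AuxPG

/-- a basis is PG iff it satisfies the interval-based condition
with `σ̂^Λ_m`. -/
theorem stmt_4 [CompleteSpace X] (f : ℕ → X →L[ℝ] ℝ) (e : ℕ → X)
    (hb : BasisSystem f e) :
    (∃ C : ℝ, 1 ≤ C ∧ PG f e C) ↔
      (∃ C : ℝ, 1 ≤ C ∧ ∀ (x : X) (m : ℕ) (Λ : Finset ℕ), Λ.card = m →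
        GreedySet f x Λ → ‖x - proj f e Λ x‖ ≤ C * hatSigma f e Λ m x) := by
  constructor
  · rintro ⟨C, hC, hpg⟩
    have hC0 : (0:ℝ) < C := by linarith
    refine ⟨C * (C + 2), by nlinarith, ?_⟩
    intro x m Λ hcard hg
    have hCC : (0:ℝ) < C * (C + 2) := by nlinarith
    have key : ∀ r ∈ {r : ℝ | ∃ I : Finset ℕ,
        (I = ∅ ∨ ∃ a b : ℕ, a ≤ b ∧ I = Finset.Icc a b ∧ ∀ n ∈ Λ, a ≤ n) ∧
        I.card ≤ m ∧ r = ‖x - proj f e I x‖},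
        ‖x - proj f e Λ x‖ ≤ C * (C + 2) * r := by
      rintro r ⟨I, hI, hIcard, rfl⟩
      rcases hI with rfl | ⟨a, b, hab, rfl, haΛ⟩
      · have h1 : ‖x - proj f e Λ x‖ ≤ C * ‖x‖ := pg_supp f e hC hpg x Λ hg
        have h0 : proj f e (∅ : Finset ℕ) x = 0 := by simp [proj]
        rw [h0, sub_zero]
        nlinarith [norm_nonneg x, norm_nonneg (x - proj f e Λ x)]
      · set I := Finset.Icc a b with hIdef
        set y := x - proj f e I x with hydef
        have hIcard' : I.card = b + 1 - a := Nat.card_Icc a b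
        have hΛne : Λ.Nonempty := by
          rw [← Finset.card_pos, hcard]
          have h1 : 1 ≤ I.card := by rw [hIcard']; omega
          omega
        obtain ⟨n₀, hn₀, hmin⟩ := Λ.exists_min_image (fun n => |f n x|) hΛne
        set α := |f n₀ x| with hαdef
        have hα0 : 0 ≤ α := abs_nonneg _
        have hsmall : ∀ k, k ∉ Λ → |f k x| ≤ α := fun k hk => hg n₀ hn₀ k hk
        set Γ := Λ \ I with hΓdef
        set A := I \ Λ with hAdef
        have hyco : ∀ n, f n y = if n ∈ I then 0 else f n x :=
          fun n => coeff_sub_proj f e hb.biorth x I n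
        have hΓg : GreedySet f y Γ := by
          intro n hn k hk
          obtain ⟨hnΛ, hnI⟩ := Finset.mem_sdiff.mp hn
          rw [hyco n, if_neg hnI, hyco k]
          split
          · simpa using abs_nonneg (f n x)
          · rename_i hkI
            exact hg n hnΛ k (fun hh => hk (Finset.mem_sdiff.mpr ⟨hh, hkI⟩))
        have hQG : ‖y - proj f e Γ y‖ ≤ C * ‖y‖ := pg_supp f e hC hpg y Γ hΓg
        have hΓy : ‖proj f e Γ y‖ ≤ (C + 1) * ‖y‖ := by
          have hh : proj f e Γ y = y - (y - proj f e Γ y) := by abel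
          rw [hh]
          calc ‖y - (y - proj f e Γ y)‖ ≤ ‖y‖ + ‖y - proj f e Γ y‖ := norm_sub_le _ _
            _ ≤ ‖y‖ + C * ‖y‖ := by linarith
            _ = (C + 1) * ‖y‖ := by ring
        have hAsub : A ⊆ Finset.range (b + 1) := by
          intro n hn
          have h1 := (Finset.mem_sdiff.mp hn).1
          rw [hIdef, Finset.mem_Icc] at h1
          exact Finset.mem_range.mpr (by omega)
        have hΓout : ∀ n ∈ Γ, b + 1 ≤ n := by
          intro n hn
          obtain ⟨hnΛ, hnI⟩ := Finset.mem_sdiff.mp hn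
          have h1 := haΛ n hnΛ
          by_contra hcon
          exact hnI (by rw [hIdef]; exact Finset.mem_Icc.mpr ⟨h1, by omega⟩)
        have hcardΓA : A.card ≤ Γ.card := by
          have h1 : A.card + (I ∩ Λ).card = I.card := Finset.card_sdiff_add_card_inter I Λ
          have h2 : Γ.card + (Λ ∩ I).card = Λ.card := Finset.card_sdiff_add_card_inter Λ I
          rw [Finset.inter_comm] at h2
          omega
        have hsign : ∀ ε : ℕ → ℝ, (∀ n, ε n = 1 ∨ ε n = -1) →
            ‖(0:X) + ∑ n ∈ A, (ε n * α) • e n‖ ≤ C * (C + 1) * ‖y‖ := by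
          intro ε hε
          set D := Finset.range (b + 1) \ A with hDdef
          set c' : ℕ → ℝ := fun n =>
            if n ∈ A then ε n * α else if n ∈ D then α else f n x with hc'def
          set SS := A ∪ D ∪ Γ with hSSdef
          set u := ∑ k ∈ SS, c' k • e k with hudef
          have hADdisj : Disjoint A D := Finset.disjoint_sdiff
          have hΓrange : ∀ n ∈ Γ, n ∉ Finset.range (b+1) := fun n hn hr => by
            have h1 := Finset.mem_range.mp hr
            have h2 := hΓout n hn
            omega
          have hDΓ : Disjoint D Γ := Finset.disjoint_left.mpr
            (by intro n hnD hnΓ; exact hΓrange _ hnΓ (Finset.mem_sdiff.mp hnD).1)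
          have hAΓ : Disjoint A Γ := Finset.disjoint_left.mpr
            (by intro n hnA hnΓ; exact hΓrange _ hnΓ (hAsub hnA))
          have hcardD : D.card = b + 1 - A.card := by
            rw [hDdef, Finset.card_sdiff_of_subset hAsub, Finset.card_range]
          have hcardDΓ : b + 1 ≤ (D ∪ Γ).card := by
            rw [Finset.card_union_of_disjoint hDΓ]
            have hA1 : A.card ≤ b + 1 := by
              have := Finset.card_le_card hAsub
              rwa [Finset.card_range] at this
            omega
          have hco : ∀ n, f n u = if n ∈ SS then c' n else 0 :=
            fun n => coeff_sum f e hb.biorth c' SS n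
          have hεabs : ∀ n, |ε n| = 1 := fun n => by rcases hε n with h | h <;> simp [h]
          have hgr : GreedySet f u (D ∪ Γ) := by
            intro n hn k hk
            have hnSS : n ∈ SS := by
              rw [hSSdef]
              rcases Finset.mem_union.mp hn with h | h
              · exact Finset.mem_union_left _ (Finset.mem_union_right _ h)
              · exact Finset.mem_union_right _ h
            have hlow : α ≤ |f n u| := by
              rw [hco n, if_pos hnSS]
              rcases Finset.mem_union.mp hn with h | h
              · have hnA : n ∉ A := Finset.disjoint_right.mp hADdisj h
                rw [hc'def]
                simp only [if_neg hnA, if_pos h]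
                rw [abs_of_nonneg hα0]
              · have hnA : n ∉ A := Finset.disjoint_right.mp hAΓ h
                have hnD : n ∉ D := Finset.disjoint_right.mp hDΓ h
                rw [hc'def]
                simp only [if_neg hnA, if_neg hnD]
                exact hmin n (Finset.mem_sdiff.mp h).1
            have hhigh : |f k u| ≤ α := by
              rw [hco k]
              split
              · rename_i hkSS
                have hkA : k ∈ A := by
                  rw [hSSdef] at hkSS
                  rcases Finset.mem_union.mp hkSS with h | h
                  · rcases Finset.mem_union.mp h with h' | h'
                    · exact h'
                    · exact absurd (Finset.mem_union_left _ h') hk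
                  · exact absurd (Finset.mem_union_right _ h) hk
                rw [hc'def]
                simp only [if_pos hkA]
                rw [abs_mul, hεabs k, one_mul, abs_of_nonneg hα0]
              · simpa using hα0
            exact hhigh.trans hlow
          have hPG := hpg u (D ∪ Γ).card (D ∪ Γ) rfl hgr
          have hSdiff : SS \ (D ∪ Γ) = A := by
            ext n
            simp only [Finset.mem_sdiff, hSSdef, Finset.mem_union]
            constructor
            · rintro ⟨h1, h2⟩
              push_neg at h2
              tauto
            · intro hnA
              refine ⟨Or.inl (Or.inl hnA), ?_⟩
              rintro (h | h)
              · exact (Finset.mem_sdiff.mp h).2 hnA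
              · exact hΓrange n h (hAsub hnA)
          have hLHS : u - proj f e (D ∪ Γ) u = ∑ n ∈ A, (ε n * α) • e n := by
            rw [hudef, sum_sub_proj f e hb.biorth, hSdiff]
            refine Finset.sum_congr rfl fun n hn => ?_
            rw [hc'def]
            simp only [if_pos hn]
          have hSdiff2 : SS \ Finset.range (b+1) = Γ := by
            ext n
            simp only [Finset.mem_sdiff, hSSdef, Finset.mem_union]
            constructor
            · rintro ⟨h1, h2⟩
              rcases h1 with (h | h) | h
              · exact absurd (hAsub h) h2
              · exact absurd (Finset.mem_sdiff.mp h).1 h2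
              · exact h
            · intro h
              exact ⟨Or.inr h, hΓrange n h⟩
          have hRHS : u - proj f e (Finset.range (b+1)) u = proj f e Γ y := by
            rw [hudef, sum_sub_proj f e hb.biorth, hSdiff2]
            refine Finset.sum_congr rfl fun n hn => ?_
            have hnI : n ∉ I := (Finset.mem_sdiff.mp hn).2
            have hnA : n ∉ A := Finset.disjoint_right.mp hAΓ hn
            have hnD : n ∉ D := Finset.disjoint_right.mp hDΓ hn
            rw [hc'def]
            simp only [if_neg hnA, if_neg hnD]
            rw [hyco n, if_neg hnI]
          have hbdd2 : BddBelow {r : ℝ | ∃ k ≤ (D ∪ Γ).card,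
              r = ‖u - proj f e (Finset.range k) u‖} :=
            ⟨0, fun r ⟨k, _, hr⟩ => hr ▸ norm_nonneg _⟩
          have hmem2 : ‖proj f e Γ y‖ ∈ {r : ℝ | ∃ k ≤ (D ∪ Γ).card,
              r = ‖u - proj f e (Finset.range k) u‖} :=
            ⟨b+1, hcardDΓ, by rw [hRHS]⟩
          rw [zero_add, ← hLHS]
          calc ‖u - proj f e (D ∪ Γ) u‖
              ≤ C * sInf {r : ℝ | ∃ k ≤ (D ∪ Γ).card,
                  r = ‖u - proj f e (Finset.range k) u‖} := hPG
            _ ≤ C * ‖proj f e Γ y‖ :=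
                mul_le_mul_of_nonneg_left (csInf_le hbdd2 hmem2) hC0.le
            _ ≤ C * ((C+1) * ‖y‖) := mul_le_mul_of_nonneg_left hΓy hC0.le
            _ = C * (C+1) * ‖y‖ := by ring
        have hAx : ‖proj f e A x‖ ≤ C * (C + 1) * ‖y‖ := by
          have h := convex_signs e α (C*(C+1)*‖y‖) hα0 A 0 (fun n => f n x)
            (fun n hn => hsmall n (Finset.mem_sdiff.mp hn).2) hsign
          simpa [proj] using h
        rw [decomp f e hb.biorth x Λ I]
        calc ‖((x - proj f e I x) - proj f e (Λ \ I) (x - proj f e I x)) + proj f e (I \ Λ) x‖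
            ≤ ‖y - proj f e Γ y‖ + ‖proj f e A x‖ := norm_add_le _ _
          _ ≤ C * ‖y‖ + C * (C+1) * ‖y‖ := add_le_add hQG hAx
          _ = C * (C + 2) * ‖y‖ := by ring
    have hne : ‖x - proj f e (∅ : Finset ℕ) x‖ ∈ {r : ℝ | ∃ I : Finset ℕ,
        (I = ∅ ∨ ∃ a b : ℕ, a ≤ b ∧ I = Finset.Icc a b ∧ ∀ n ∈ Λ, a ≤ n) ∧
        I.card ≤ m ∧ r = ‖x - proj f e I x‖} :=
      ⟨∅, Or.inl rfl, by simp, rfl⟩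
    have h2 : ‖x - proj f e Λ x‖ / (C * (C + 2)) ≤ hatSigma f e Λ m x := by
      unfold hatSigma
      exact le_csInf ⟨_, hne⟩ fun r hr => (div_le_iff₀ hCC).mpr (by rw [mul_comm]; exact key r hr)
    calc ‖x - proj f e Λ x‖
        = C * (C + 2) * (‖x - proj f e Λ x‖ / (C * (C + 2))) := by field_simp
      _ ≤ C * (C + 2) * hatSigma f e Λ m x := mul_le_mul_of_nonneg_left h2 hCC.le
  · rintro ⟨C, hC, h⟩
    refine ⟨C, hC, ?_⟩
    intro x m Λ hcard hg
    refine (h x m Λ hcard hg).trans (mul_le_mul_of_nonneg_left ?_ (by linarith))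
    unfold hatSigma
    apply csInf_le_csInf
    · exact ⟨0, fun r hr => by obtain ⟨I, _, _, rfl⟩ := hr; exact norm_nonneg _⟩
    · exact ⟨‖x - proj f e (Finset.range 0) x‖, 0, Nat.zero_le m, rfl⟩
    · rintro r ⟨k, hk, rfl⟩
      rcases k with _ | j
      · exact ⟨∅, Or.inl rfl, by simp, by rw [Finset.range_zero]⟩
      · refine ⟨Finset.Icc 0 j, Or.inr ⟨0, j, Nat.zero_le _, rfl, fun n _ => Nat.zero_le n⟩, ?_, ?_⟩
        · rw [Nat.card_Icc]; omega
        · rw [Finset.range_eq_Ico, Finset.Ico_add_one_right_eq_Icc]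
end
end

section
/- If a basis is C_ℓ-suppression quasi-greedy and C_{1,rp}-(1, RPGII), then it is C_{1,rp}-(1, RPSLC). -/
open Finset Filter

noncomputable section

variable {X : Type*} [NormedAddCommGroup X] [NormedSpace ℝ X]

lemma f_sum_eq (f : ℕ → X →L[ℝ] ℝ) (e : ℕ → X)
    (hbio : ∀ n m, f n (e m) = if n = m then (1 : ℝ) else 0)
    (S : Finset ℕ) (c : ℕ → ℝ) (n : ℕ) :
    f n (∑ k ∈ S, c k • e k) = if n ∈ S then c n else 0 := by
  rw [map_sum]
  simp only [map_smul, hbio, smul_eq_mul, mul_ite, mul_one, mul_zero]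
  exact Finset.sum_ite_eq S n c

/-- suppression quasi-greedy + `C`-(1, RPGII) implies `C`-(1, RPSLC). -/
theorem stmt_6 [CompleteSpace X] (f : ℕ → X →L[ℝ] ℝ) (e : ℕ → X)
    (hb : BasisSystem f e) (Cl C : ℝ) (hs : SuppQG f e Cl)
    (h : RPGII f e 1 C) : RPSLC f e 1 C := by
  have hbio := hb.biorth
  -- first: C ≥ 0
  have hC : 0 ≤ C := by
    obtain ⟨c₁, c₂, hc₁, hbd⟩ := hb.bounded
    have h0 : (0:ℝ) < ‖e 0‖ := lt_of_lt_of_le hc₁ (hbd 0).1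
    have hgr0 : GreedySet f (e 0) ∅ := fun n hn => absurd hn (Finset.notMem_empty n)
    have hkey := h (e 0) 0 ∅ (by simp) hgr0
    have hσ : checkSigma f e ∅ 0 (e 0) = ‖e 0‖ := by
      unfold checkSigma
      have hset : {r : ℝ | ∃ I : Finset ℕ,
          (I = ∅ ∨ ∃ a b : ℕ, a ≤ b ∧ I = Finset.Icc a b ∧ ∀ n ∈ (∅ : Finset ℕ), n ≤ b) ∧
          I.card ≤ 0 ∧ r = ‖e 0 - proj f e I (e 0)‖} = {‖e 0‖} := by
        ext r
        constructor
        · rintro ⟨I, _, hI, rfl⟩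
          have hIe : I = ∅ := Finset.card_eq_zero.mp (Nat.le_zero.mp hI)
          simp [hIe, proj]
        · rintro rfl
          exact ⟨∅, Or.inl rfl, by simp, by simp [proj]⟩
      rw [hset, csInf_singleton]
    rw [hσ] at hkey
    have : ‖e 0 - proj f e ∅ (e 0)‖ = ‖e 0‖ := by simp [proj]
    rw [this] at hkey
    nlinarith
  intro x hx ε δ hε hδ A B hcard hBx hBA hsur
  have hAB : A.card ≤ B.card := by
    have h0 : ((1:ℝ) - 1) * (spread A : ℝ) = 0 := by ring
    rw [h0, zero_add] at hcard
    exact_mod_cast hcard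
  rcases A.eq_empty_or_nonempty with rfl | hA
  · -- A = ∅
    set w := x + ∑ n ∈ B, δ n • e n with hw
    have hfw : ∀ n, f n w = f n x + (if n ∈ B then δ n else 0) := by
      intro n; rw [hw, map_add, f_sum_eq f e hbio]
    have hgr : GreedySet f w B := by
      intro n hn k hk
      have h1 : f n w = δ n := by rw [hfw]; simp [hn, hBx n hn]
      have h2 : f k w = f k x := by rw [hfw]; simp [hk]
      rw [h1, h2, hδ n]; exact hx k
    have hkey := h w B.card B (by simp) hgr
    have hproj : proj f e B w = ∑ n ∈ B, δ n • e n := by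
      unfold proj
      refine Finset.sum_congr rfl fun n hn => ?_
      rw [hfw]; simp [hn, hBx n hn]
    have hσ : checkSigma f e B B.card w ≤ ‖x + ∑ n ∈ B, δ n • e n‖ := by
      apply csInf_le (checkSigma_bddBelow f e B B.card w)
      exact ⟨∅, Or.inl rfl, by simp, by simp [proj, hw]⟩
    have hsub : w - proj f e B w = x := by rw [hproj, hw]; abel
    simp only [Finset.sum_empty, add_zero]
    calc ‖x‖ = ‖w - proj f e B w‖ := by rw [hsub]
      _ ≤ C * checkSigma f e B B.card w := hkey
      _ ≤ C * ‖x + ∑ n ∈ B, δ n • e n‖ := mul_le_mul_of_nonneg_left hσ hC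
  · -- A nonempty
    set a0 := A.min' hA with ha0
    set a1 := A.max' hA with ha1
    have ha01 : a0 ≤ a1 := A.min'_le a1 (A.max'_mem hA)
    set I : Finset ℕ := Finset.Icc a0 a1 with hI
    have hAI : A ⊆ I := fun n hn => Finset.mem_Icc.mpr ⟨A.min'_le n hn, A.le_max' n hn⟩
    have hIcard : I.card = spread A := by
      rw [hI, Nat.card_Icc, spread, dif_pos hA]; omega
    have hxI : ∀ n ∈ I, f n x = 0 := fun n hn =>
      hsur a0 (A.min'_mem hA) a1 (A.max'_mem hA) n (Finset.mem_Icc.mp hn).1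
        (Finset.mem_Icc.mp hn).2
    have hBa0 : ∀ b ∈ B, b < a0 := fun b hb => hBA b hb a0 (A.min'_mem hA)
    have hBI : ∀ b ∈ B, b ∉ I := fun b hb hbI =>
      absurd (Finset.mem_Icc.mp hbI).1 (not_le.mpr (hBa0 b hb))
    set m := max B.card (spread A) with hm
    have hNle : m - B.card ≤ (I \ A).card := by
      rw [Finset.card_sdiff_of_subset hAI, hIcard]
      rcases le_total (spread A) B.card with hle | hle
      · omega
      · omega
    obtain ⟨N, hNsub, hNcard⟩ := Finset.exists_subset_card_eq hNle
    have hNI : N ⊆ I := hNsub.trans (Finset.sdiff_subset)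
    have hNA : ∀ n ∈ N, n ∉ A := fun n hn => (Finset.mem_sdiff.mp (hNsub hn)).2
    set Λ : Finset ℕ := B ∪ N with hΛ
    have hdisj : Disjoint B N := Finset.disjoint_left.mpr fun b hb hbN => hBI b hb (hNI hbN)
    have hΛcard : Λ.card = m := by
      rw [hΛ, Finset.card_union_of_disjoint hdisj, hNcard]
      have : B.card ≤ m := le_max_left _ _
      omega
    have hxΛ : ∀ n ∈ Λ, f n x = 0 := by
      intro n hn
      rcases Finset.mem_union.mp hn with hn | hn
      · exact hBx n hn
      · exact hxI n (hNI hn)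
    have hΛA : ∀ n ∈ Λ, n ∉ A := by
      intro n hn
      rcases Finset.mem_union.mp hn with hn | hn
      · exact fun hnA => absurd (hBA n hn n hnA) (lt_irrefl n)
      · exact hNA n hn
    have hxA : ∀ n ∈ A, f n x = 0 := fun n hn => hsur n hn n hn n le_rfl le_rfl
    set w := x + ∑ n ∈ A, ε n • e n + ∑ n ∈ Λ, δ n • e n with hw
    have hfw : ∀ n, f n w = f n x + (if n ∈ A then ε n else 0)
        + (if n ∈ Λ then δ n else 0) := by
      intro n
      rw [hw, map_add, map_add, f_sum_eq f e hbio, f_sum_eq f e hbio]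
    have hfwΛ : ∀ n ∈ Λ, f n w = δ n := by
      intro n hn
      rw [hfw]; simp [hn, hΛA n hn, hxΛ n hn]
    have hgr : GreedySet f w Λ := by
      intro n hn k hk
      rw [hfwΛ n hn, hδ n]
      rcases Classical.em (k ∈ A) with hkA | hkA
      · have : f k w = ε k := by rw [hfw]; simp [hkA, hk, hxA k hkA]
        rw [this, hε k]
      · have : f k w = f k x := by rw [hfw]; simp [hkA, hk]
        rw [this]; exact hx k
    have hkey := h w m Λ (by simp [hΛcard]) hgr
    have hprojΛ : proj f e Λ w = ∑ n ∈ Λ, δ n • e n := by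
      unfold proj
      exact Finset.sum_congr rfl fun n hn => by rw [hfwΛ n hn]
    have hsubΛ : w - proj f e Λ w = x + ∑ n ∈ A, ε n • e n := by
      rw [hprojΛ, hw]; abel
    have hprojI : proj f e I w = ∑ n ∈ A, ε n • e n + ∑ n ∈ N, δ n • e n := by
      unfold proj
      have : ∀ n ∈ I, f n w • e n =
          (if n ∈ A then ε n • e n else 0) + (if n ∈ Λ then δ n • e n else 0) := by
        intro n hn
        rw [hfw, hxI n hn, zero_add, add_smul]
        congr 1 <;> [skip; skip] <;> split <;> simp
      rw [Finset.sum_congr rfl this, Finset.sum_add_distrib,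
        Finset.sum_ite_mem, Finset.sum_ite_mem]
      have hIA : I ∩ A = A := Finset.inter_eq_right.mpr hAI
      have hIΛ : I ∩ Λ = N := by
        rw [hΛ, Finset.inter_union_distrib_left]
        have h1 : I ∩ B = ∅ := Finset.eq_empty_of_forall_notMem fun n hn =>
          hBI n (Finset.mem_inter.mp hn).2 (Finset.mem_inter.mp hn).1
        have h2 : I ∩ N = N := Finset.inter_eq_right.mpr hNI
        rw [h1, h2, Finset.empty_union]
      rw [hIA, hIΛ]
    have hΛsum : ∑ n ∈ Λ, δ n • e n = ∑ n ∈ B, δ n • e n + ∑ n ∈ N, δ n • e n := by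
      rw [hΛ, Finset.sum_union hdisj]
    have hsubI : w - proj f e I w = x + ∑ n ∈ B, δ n • e n := by
      rw [hprojI, hw, hΛsum]; abel
    have hσ : checkSigma f e Λ m w ≤ ‖x + ∑ n ∈ B, δ n • e n‖ := by
      apply csInf_le (checkSigma_bddBelow f e Λ m w)
      refine ⟨I, Or.inr ⟨a0, a1, ha01, hI, ?_⟩, ?_, hsubI.symm ▸ rfl⟩
      · intro n hn
        rcases Finset.mem_union.mp hn with hn | hn
        · exact le_of_lt (lt_of_lt_of_le (hBa0 n hn) ha01)
        · exact (Finset.mem_Icc.mp (hNI hn)).2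
      · rw [hIcard]; exact le_max_right _ _
    calc ‖x + ∑ n ∈ A, ε n • e n‖ = ‖w - proj f e Λ w‖ := by rw [hsubΛ]
      _ ≤ C * checkSigma f e Λ m w := hkey
      _ ≤ C * ‖x + ∑ n ∈ B, δ n • e n‖ := mul_le_mul_of_nonneg_left hσ hC
end
end
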